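/- arXiv:math/0201122 — 4 statements merged into one kernel-verified Lean document; each statement's English description precedes it below -/
import Mathlib

section
/- Let t be a nonzero complex number and let M be the free ℂ-module with basis {δ_k : k ∈ ℤ} (e.g., finitely supported functions ℤ → ℂ). For integers p, q let C(p,q) : M → M be the unique ℂ-linear map with C(p,q)δ_k = t^{-pq}*(t^{2qk} δ_{k-p} + t^{-2qk} δ_{k+p}) for all k ∈ ℤ. Then for all integers m, n, p, q: C(m,n) ∘ C(p,q) = t^{mq-np}·C(m+p,n+q) + t^{-(mq-np)}·C(m-p,n-q). -/
/-- Product-to-sum formula for the operators `C(p,q)` on the free ℂ-module on ℤ,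
defined on the basis by `C(p,q) δ_k = t^{-pq}(t^{2qk} δ_{k-p} + t^{-2qk} δ_{k+p})`. -/
theorem stmt2 (t : ℂ) (ht : t ≠ 0)
    (C : ℤ → ℤ → ((ℤ →₀ ℂ) →ₗ[ℂ] (ℤ →₀ ℂ)))
    (hC : ∀ p q k : ℤ, C p q (Finsupp.single k 1) =
      t ^ (-(p * q)) •
        (t ^ (2 * q * k) • Finsupp.single (k - p) (1 : ℂ) +
         t ^ (-(2 * q * k)) • Finsupp.single (k + p) (1 : ℂ))) :
    ∀ m n p q : ℤ,
      C m n ∘ₗ C p q =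
        t ^ (m * q - n * p) • C (m + p) (n + q) +
        t ^ (-(m * q - n * p)) • C (m - p) (n - q) := by
  intro m n p q
  apply Finsupp.lhom_ext'
  intro k
  apply LinearMap.ext_ring
  simp only [LinearMap.comp_apply, Finsupp.lsingle_apply, LinearMap.add_apply,
    LinearMap.smul_apply, hC, map_add, map_smul, smul_add, smul_smul, ← zpow_add₀ ht]
  ring_nf
  abel
end

section
/- Fix an integer r ≥ 3 and let t = exp(πi/(2r)). Let H = ℂ^{r-1} with standard basis e_1, …, e_{r-1}. Let ε : ℤ → H be the unique function that is odd (ε(-k) = -ε(k) for all k), 2r-periodic (ε(k+2r) = ε(k) for all k), satisfies ε(0) = 0 and ε(k) = e_k for 1 ≤ k ≤ r-1. For integers p, q let C(p,q) : H → H be the unique ℂ-linear map with C(p,q)e_k = t^{-pq}*(t^{2qk} ε(k-p) + t^{-2qk} ε(k+p)) for 1 ≤ k ≤ r-1. Then for all integers m, n, p, q: C(m,n) ∘ C(p,q) = t^{mq-np}·C(m+p,n+q) + t^{-(mq-np)}·C(m-p,n-q). -/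
/-!
Write `F p q k := t^{-pq}(t^{2qk} ε(k-p) + t^{-2qk} ε(k+p))`. Since `ε` is odd and
`2r`-periodic and `t^{4r} = 1`, the function `k ↦ F p q k` is again odd and `2r`-periodic,
and so is `k ↦ C(p,q)(ε k)`. An odd `2r`-periodic function vanishing on `1, …, r-1` vanishes
identically, so `C(p,q)(ε k) = F p q k` for every integer `k`, not only for `1 ≤ k ≤ r-1`.
With this closed form for all labels, applying `C(m,n)` to `F p q k` is a direct computation
that matches the four terms of the right-hand side by comparing exponents of `t`.
-/

open Function

theorem Function.Periodic.eq_zero_of_odd_of_eq_zero_of_mem_Icc {V : Type*} [AddCommGroup V]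
    [IsAddTorsionFree V] {f : ℤ → V} {r : ℤ} (hr : 0 < r) (hper : Periodic f (2 * r))
    (hodd : ∀ k, f (-k) = -f k) (hvanish : ∀ k, 1 ≤ k → k ≤ r - 1 → f k = 0) (k : ℤ) :
    f k = 0 := by
  have hreflect : ∀ k, f (2 * r - k) = -f k := fun k => by
    rw [← hodd, ← hper (-k), neg_add_eq_sub]
  obtain ⟨y, ⟨hy0, hy⟩, hky⟩ := hper.exists_mem_Ico₀ (by omega) k
  rw [hky]
  rcases eq_or_ne y 0 with rfl | hy0'
  · exact self_eq_neg.mp (by simpa using hodd 0)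
  rcases le_or_gt y (r - 1) with hyr | hyr
  · exact hvanish y (by omega) hyr
  rcases eq_or_ne y r with rfl | hyr'
  · exact self_eq_neg.mp (by simpa [two_mul] using hreflect y)
  · rw [← neg_neg (f y), ← hreflect, hvanish _ (by omega) (by omega), neg_zero]

theorem zpow_add_mul_of_zpow_eq_one {G₀ : Type*} [GroupWithZero G₀] {t : G₀} {N : ℤ}
    (ht : t ^ N = 1) (a b : ℤ) : t ^ (a + N * b) = t ^ a := by
  rcases eq_or_ne N 0 with rfl | hN
  · simp
  have ht0 : t ≠ 0 := by
    rintro rfl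
    simp [zero_zpow N hN] at ht
  rw [zpow_add₀ ht0, zpow_mul, ht, one_zpow, mul_one]

theorem Complex.exp_pi_mul_I_div_zpow_four_mul {r : ℕ} (hr : r ≠ 0) :
    Complex.exp (Real.pi * Complex.I / (2 * r)) ^ (4 * (r : ℤ)) = 1 := by
  have h := (Complex.isPrimitiveRoot_exp (4 * r) (by omega)).zpow_eq_one
  rw [show 2 * (Real.pi : ℂ) * Complex.I / ((4 * r : ℕ) : ℂ) = Real.pi * Complex.I / (2 * r) by
    push_cast; field_simp; ring] at h
  exact_mod_cast h

section QuantumCos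

variable {K V : Type*} [Field K] [AddCommGroup V] [Module K V]

/-- The image of the basis vector `e_k` under the quantization `C(p,q)` of
`2 cos 2π(px + qy)`. -/
def quantumCos (t : K) (ε : ℤ → V) (p q k : ℤ) : V :=
  t ^ (-(p * q)) • (t ^ (2 * q * k) • ε (k - p) + t ^ (-(2 * q * k)) • ε (k + p))

variable {t : K} {ε : ℤ → V}

theorem quantumCos_neg (hodd : ∀ k, ε (-k) = -ε k) (p q k : ℤ) :
    quantumCos t ε p q (-k) = -quantumCos t ε p q k := by
  rw [quantumCos, quantumCos, show -k - p = -(k + p) by ring, show -k + p = -(k - p) by ring,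
    hodd, hodd]
  simp only [mul_neg, neg_neg]
  module

theorem quantumCos_periodic {r : ℤ} (ht : t ^ (4 * r) = 1) (hper : Periodic ε (2 * r))
    (p q : ℤ) : Periodic (quantumCos t ε p q) (2 * r) := fun k => by
  have hexp₁ : t ^ (2 * q * (k + 2 * r)) = t ^ (2 * q * k) := by
    rw [show 2 * q * (k + 2 * r) = 2 * q * k + 4 * r * q by ring]
    exact zpow_add_mul_of_zpow_eq_one ht _ _
  have hexp₂ : t ^ (-(2 * q * (k + 2 * r))) = t ^ (-(2 * q * k)) := by
    rw [show -(2 * q * (k + 2 * r)) = -(2 * q * k) + 4 * r * (-q) by ring]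
    exact zpow_add_mul_of_zpow_eq_one ht _ _
  simp only [quantumCos, hexp₁, hexp₂, show k + 2 * r - p = k - p + 2 * r by ring,
    add_right_comm k (2 * r) p, hper _]

theorem quantumCos_comp (ht : t ≠ 0) {C : ℤ → ℤ → V →ₗ[K] V}
    (hC : ∀ p q k, C p q (ε k) = quantumCos t ε p q k) (m n p q k : ℤ) :
    C m n (quantumCos t ε p q k) =
      t ^ (m * q - n * p) • quantumCos t ε (m + p) (n + q) k +
        t ^ (-(m * q - n * p)) • quantumCos t ε (m - p) (n - q) k := by
  rw [quantumCos, map_smul, map_add, map_smul, map_smul, hC, hC]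
  simp only [quantumCos, smul_add, smul_smul, ← zpow_add₀ ht,
    show k - p - m = k - (m + p) by ring, show k - p + m = k + (m - p) by ring,
    show k + p - m = k - (m - p) by ring, show k + p + m = k + (m + p) by ring]
  match_scalars <;> ring_nf

end QuantumCos

theorem Pi.single_one_eq_of_eq_ite {r : ℕ} {ε : ℤ → (Fin (r - 1) → ℂ)}
    (hbasis : ∀ k : ℤ, 1 ≤ k → k ≤ (r : ℤ) - 1 →
      ε k = fun j : Fin (r - 1) => if ((j : ℕ) : ℤ) + 1 = k then 1 else 0)
    (j : Fin (r - 1)) : Pi.single j (1 : ℂ) = ε ((j : ℕ) + 1) := by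
  rw [hbasis _ (by omega) (by omega)]
  ext i
  simp only [Pi.single_apply, add_left_inj, Nat.cast_inj, Fin.val_inj]

theorem stmt4_general (r : ℕ) (hr : 3 ≤ r) (t : ℂ)
    (ht : t = Complex.exp (Real.pi * Complex.I / (2 * r)))
    (ε : ℤ → (Fin (r - 1) → ℂ))
    (hodd : ∀ k : ℤ, ε (-k) = -ε k)
    (hper : ∀ k : ℤ, ε (k + 2 * r) = ε k)
    (hbasis : ∀ k : ℤ, 1 ≤ k → k ≤ (r : ℤ) - 1 →
      ε k = fun j : Fin (r - 1) => if ((j : ℕ) : ℤ) + 1 = k then 1 else 0)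
    (C : ℤ → ℤ → ((Fin (r - 1) → ℂ) →ₗ[ℂ] (Fin (r - 1) → ℂ)))
    (hC : ∀ p q k : ℤ, 1 ≤ k → k ≤ (r : ℤ) - 1 →
      C p q (ε k) = t ^ (-(p * q)) •
        (t ^ (2 * q * k) • ε (k - p) + t ^ (-(2 * q * k)) • ε (k + p))) :
    ∀ m n p q : ℤ,
      C m n ∘ₗ C p q =
        t ^ (m * q - n * p) • C (m + p) (n + q) +
        t ^ (-(m * q - n * p)) • C (m - p) (n - q) := by
  intro m n p q
  have ht0 : t ≠ 0 := ht ▸ Complex.exp_ne_zero _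
  have ht4 : t ^ (4 * (r : ℤ)) = 1 := ht ▸ Complex.exp_pi_mul_I_div_zpow_four_mul (by omega)
  have hCε : ∀ p q k, C p q (ε k) = quantumCos t ε p q k := fun p q k =>
    sub_eq_zero.mp <| Periodic.eq_zero_of_odd_of_eq_zero_of_mem_Icc
      (f := fun k => C p q (ε k) - quantumCos t ε p q k) (by omega)
      ((Periodic.comp hper (C p q)).sub (quantumCos_periodic ht4 hper p q))
      (fun k => by simp only [hodd, map_neg, quantumCos_neg hodd]; abel)
      (fun k hk1 hkr => sub_eq_zero.mpr (hC p q k hk1 hkr)) k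
  refine (Pi.basisFun ℂ (Fin (r - 1))).ext fun j => ?_
  simp only [Pi.basisFun_apply, Pi.single_one_eq_of_eq_ite hbasis, LinearMap.comp_apply,
    LinearMap.add_apply, LinearMap.smul_apply, hCε, quantumCos_comp ht0 hCε]

/-- Product-to-sum formula for the quantized observables `C(p,q)` on the Hilbert
space `H = ℂ^{r-1}` of the quantization of the moduli space of flat
`SU(2)`-connections on the torus, at level `r` with `t = exp(πi/(2r))`.
Here `ε` is the odd `2r`-periodic extension of the standard basis to all
integer labels and `C(p,q)` is determined on the basis by
`C(p,q) e_k = t^{-pq}(t^{2qk} ε(k-p) + t^{-2qk} ε(k+p))`. -/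
theorem stmt4 (r : ℕ) (hr : 3 ≤ r) (t : ℂ)
    (ht : t = Complex.exp (Real.pi * Complex.I / (2 * r)))
    (ε : ℤ → (Fin (r - 1) → ℂ))
    (hodd : ∀ k : ℤ, ε (-k) = -ε k)
    (hper : ∀ k : ℤ, ε (k + 2 * r) = ε k)
    (hzero : ε 0 = 0)
    (hbasis : ∀ k : ℤ, 1 ≤ k → k ≤ (r : ℤ) - 1 →
      ε k = fun j : Fin (r - 1) => if ((j : ℕ) : ℤ) + 1 = k then 1 else 0)
    (C : ℤ → ℤ → ((Fin (r - 1) → ℂ) →ₗ[ℂ] (Fin (r - 1) → ℂ)))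
    (hC : ∀ p q k : ℤ, 1 ≤ k → k ≤ (r : ℤ) - 1 →
      C p q (ε k) = t ^ (-(p * q)) •
        (t ^ (2 * q * k) • ε (k - p) + t ^ (-(2 * q * k)) • ε (k + p))) :
    ∀ m n p q : ℤ,
      C m n ∘ₗ C p q =
        t ^ (m * q - n * p) • C (m + p) (n + q) +
        t ^ (-(m * q - n * p)) • C (m - p) (n - q) :=
  stmt4_general r hr t ht ε hodd hper hbasis C hC
end

section
/- Fix an integer r ≥ 3, let t = exp(πi/(2r)), let [n] = (t^{2n} - t^{-2n})/(t^2 - t^{-2}) for n ∈ ℤ, and let X² = Σ_{j=1}^{r-1} [j]². Then for all integers a, b, c, d, e: Σ_{x=1}^{r-1} Σ_{y=1}^{r-1} [ax]·t^{bx²}·[cy]·([x(y+d)]·t^{2ey} + [x(y-d)]·t^{-2ey}) = X²·t^{bc²+be²-2de}·([a(c+e)]·t^{2(be-d)c} + [a(c-e)]·t^{-2(be-d)c}). -/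
set_option linter.unusedSectionVars false
set_option linter.unusedVariables false
set_option maxHeartbeats 1000000

open Finset

namespace Stmt6Aux

lemma sumIcc (N : ℕ) (f : ℤ → ℂ) : ∑ y ∈ Icc (0:ℤ) ((N:ℤ)-1), f y = ∑ i ∈ range N, f i := by
  refine Finset.sum_nbij' (fun y => y.toNat) (fun i => (i:ℤ)) ?_ ?_ ?_ ?_ ?_ <;>
    · intro a ha
      simp only [mem_Icc, mem_range] at *
      try omega
      try (congr 1; omega)

lemma periodExt (f : ℤ → ℂ) (c : ℤ) (hf : ∀ x, f (x + c) = f x) :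
    ∀ (k x : ℤ), f (x + c*k) = f x := by
  intro k
  induction k using Int.induction_on with
  | zero => simp
  | succ k ih => intro x
                 have : x + c*((k:ℤ)+1) = (x + c*k) + c := by ring
                 rw [this, hf, ih]
  | pred k ih => intro x
                 have h1 := hf (x + c*(-(k:ℤ)-1))
                 have : x + c*(-(k:ℤ)-1) + c = x + c*(-(k:ℤ)) := by ring
                 rw [this, ih] at h1
                 exact h1.symm

lemma pick {R : ℤ} (hR : 0 < 2*R) (f : ℤ → ℂ) (hf : ∀ x, f (x + 2*R) = f x) (x₀ : ℤ) :
    ∑ x ∈ Icc (0:ℤ) (2*R-1), f x * (if (2*R) ∣ (x - x₀) then (1:ℂ) else 0) = f x₀ := by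
  have hper := periodExt f (2*R) hf
  set x₁ := x₀ % (2*R) with hx₁
  have hmem : x₁ ∈ Icc (0:ℤ) (2*R-1) := by
    simp only [mem_Icc]
    have h1 := Int.emod_nonneg x₀ (by omega : (2*R) ≠ 0)
    have h2 := Int.emod_lt_of_pos x₀ hR
    omega
  rw [Finset.sum_eq_single_of_mem x₁ hmem]
  · rw [if_pos ⟨-(x₀/(2*R)), by rw [hx₁, Int.emod_def]; ring⟩, mul_one]
    have : x₀ = x₁ + (2*R)*(x₀/(2*R)) := by rw [hx₁, Int.emod_def]; ring
    rw [this, hper]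
  · intro x hx hne
    rw [if_neg, mul_zero]
    intro hdvd
    apply hne
    have h0 : (x - x₀) % (2*R) = 0 := Int.emod_eq_zero_of_dvd hdvd
    have h1 : x % (2*R) = x₀ % (2*R) := Int.emod_eq_emod_iff_emod_sub_eq_zero.2 h0
    simp only [mem_Icc] at hx
    rw [Int.emod_eq_of_lt (by omega) (by omega)] at h1
    omega

lemma reflectSplit {R : ℤ} (hR : 3 ≤ R) (h : ℤ → ℂ) (h0 : h 0 = 0) (hr : h R = 0) :
    ∑ y ∈ Icc (1:ℤ) (R-1), (h y + h (2*R - y)) = ∑ y ∈ Icc (0:ℤ) (2*R-1), h y := by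
  rw [Finset.sum_add_distrib]
  have h2 : ∑ y ∈ Icc (1:ℤ) (R-1), h (2*R - y) = ∑ y ∈ Icc (R+1) (2*R-1), h y := by
    refine Finset.sum_nbij' (fun y => 2*R - y) (fun y => 2*R - y) ?_ ?_ ?_ ?_ ?_ <;>
      · intro a ha
        simp only [mem_Icc] at *
        try omega
  rw [h2]
  have hsub : (Icc (1:ℤ) (R-1) ∪ Icc (R+1) (2*R-1)) ⊆ Icc (0:ℤ) (2*R-1) := by
    intro x hx
    simp only [mem_union, mem_Icc] at *
    omega
  have hdisj : Disjoint (Icc (1:ℤ) (R-1)) (Icc (R+1) (2*R-1)) := by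
    rw [Finset.disjoint_left]
    intro x hx1 hx2
    simp only [mem_Icc] at *
    omega
  have hunion : ∑ y ∈ (Icc (1:ℤ) (R-1) ∪ Icc (R+1) (2*R-1)), h y
      = ∑ y ∈ Icc (1:ℤ) (R-1), h y + ∑ y ∈ Icc (R+1) (2*R-1), h y :=
    Finset.sum_union hdisj
  rw [← hunion]
  refine Finset.sum_subset hsub ?_
  intro x hx hnx
  simp only [mem_union, mem_Icc, not_or, not_and, not_le] at hx hnx
  have : x = 0 ∨ x = R := by omega
  rcases this with rfl | rfl
  · exact h0
  · exact hr

section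
variable {r : ℕ} {t : ℂ} (hroot : ∀ k : ℤ, t ^ k = 1 ↔ (4*(r:ℤ)) ∣ k) (hr : 3 ≤ r)
include hroot hr

lemma ht0' : t ≠ 0 := by
  intro h
  have h1 : t ^ ((4*(r:ℤ))) = 1 := (hroot _).2 ⟨1, by ring⟩
  rw [h, zero_zpow _ (by positivity)] at h1
  exact zero_ne_one h1

lemma tper4 : ∀ (m k : ℤ), t ^ (m + 4*(r:ℤ)*k) = t ^ m := by
  intro m k
  rw [zpow_add₀ (ht0' hroot hr), (hroot (4*(r:ℤ)*k)).2 ⟨k, by ring⟩, mul_one]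

lemma h2r : t ^ (2*(r:ℤ)) = -1 := by
  have hsq : t ^ (2*(r:ℤ)) * t ^ (2*(r:ℤ)) = 1 := by
    rw [← zpow_add₀ (ht0' hroot hr)]
    exact (hroot _).2 ⟨1, by ring⟩
  rcases mul_self_eq_one_iff.1 hsq with h1 | h1
  · exfalso
    obtain ⟨k, hk⟩ := (hroot _).1 h1
    rcases le_or_gt k 0 with hk0 | hk0
    · nlinarith [(by exact_mod_cast hr : (3:ℤ) ≤ (r:ℤ))]
    · nlinarith [(by exact_mod_cast hr : (3:ℤ) ≤ (r:ℤ))]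
  · exact h1

lemma hDne : t ^ (2:ℤ) - t ^ (-2:ℤ) ≠ 0 := by
  intro h
  have h2 : t ^ (2:ℤ) = t ^ (-2:ℤ) := sub_eq_zero.1 h
  have h4 : t ^ (4:ℤ) = 1 := by
    calc t ^ (4:ℤ) = t ^ (2:ℤ) * t ^ (2:ℤ) := by
          rw [← zpow_add₀ (ht0' hroot hr)]; norm_num
      _ = t ^ (2:ℤ) * t ^ (-2:ℤ) := by rw [← h2]
      _ = 1 := by rw [← zpow_add₀ (ht0' hroot hr)]; norm_num
  have := Int.le_of_dvd (by norm_num) ((hroot 4).1 h4)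
  omega

lemma geom (m : ℤ) :
    ∑ y ∈ Icc (0:ℤ) (2*(r:ℤ)-1), t ^ (2*m*y) = if (2*(r:ℤ)) ∣ m then ((2*r : ℕ) : ℂ) else 0 := by
  have ht0 : t ≠ 0 := ht0' hroot hr
  have hcast : (2*(r:ℤ)-1) = ((2*r : ℕ) : ℤ) - 1 := by push_cast; ring
  rw [hcast, sumIcc]
  have hz : ∀ y : ℤ, t ^ (2*m*y) = (t ^ (2*m)) ^ y := fun y => by
    rw [← zpow_mul]
  by_cases h : (2*(r:ℤ)) ∣ m
  · rw [if_pos h]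
    have hu : t ^ (2*m) = 1 := by
      obtain ⟨k, rfl⟩ := h
      exact (hroot _).2 ⟨k, by ring⟩
    calc ∑ i ∈ range (2*r), t ^ (2*m*(i:ℤ)) = ∑ i ∈ range (2*r), (1:ℂ) := by
          refine Finset.sum_congr rfl fun i _ => ?_
          rw [hz, hu, one_zpow]
      _ = _ := by simp
  · rw [if_neg h]
    set u := t ^ (2*m) with hu
    have hu1 : u ≠ 1 := by
      intro h1
      obtain ⟨k, hk⟩ := (hroot (2*m)).1 h1
      exact h ⟨k, by linarith⟩
    have huN : u ^ (2*r) = 1 := by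
      rw [hu, ← zpow_natCast, ← zpow_mul]
      refine (hroot _).2 ⟨m, by push_cast; ring⟩
    calc ∑ i ∈ range (2*r), t ^ (2*m*(i:ℤ)) = ∑ i ∈ range (2*r), u ^ i := by
          refine Finset.sum_congr rfl fun i _ => ?_
          rw [hz, ← zpow_natCast]
      _ = (u ^ (2*r) - 1)/(u - 1) := geom_sum_eq hu1 _
      _ = 0 := by rw [huN]; simp

variable {qi : ℤ → ℂ}
  (hqi : ∀ n : ℤ, qi n = (t ^ (2 * n) - t ^ (-(2 * n))) / (t ^ (2 : ℤ) - t ^ (-2 : ℤ)))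
include hqi

lemma qi_zero : qi 0 = 0 := by rw [hqi]; norm_num

lemma qi_neg (n : ℤ) : qi (-n) = - qi n := by
  rw [hqi, hqi, show (2 * -n) = -(2*n) by ring]
  simp only [neg_neg]
  ring

lemma qi_per (n k : ℤ) : qi (n + 2*(r:ℤ)*k) = qi n := by
  rw [hqi, hqi]
  congr 2
  · rw [show (2*(n + 2*(r:ℤ)*k)) = 2*n + 4*(r:ℤ)*k by ring, tper4 hroot hr]
  · rw [show (-(2*(n + 2*(r:ℤ)*k))) = -(2*n) + 4*(r:ℤ)*(-k) by ring, tper4 hroot hr]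

lemma qi_rmul (c : ℤ) : qi ((r:ℤ)*c) = 0 := by
  have h1 : t ^ (2*((r:ℤ)*c)) = (-1:ℂ) ^ c := by
    rw [show 2*((r:ℤ)*c) = (2*(r:ℤ))*c from by ring, zpow_mul, h2r hroot hr]
  have h2 : t ^ (-(2*((r:ℤ)*c))) = (-1:ℂ) ^ (-c) := by
    rw [show -(2*((r:ℤ)*c)) = (2*(r:ℤ))*(-c) from by ring, zpow_mul, h2r hroot hr]
  have hsq : ((-1:ℂ) ^ c) * ((-1:ℂ) ^ c) = 1 := by
    rw [← zpow_add₀ (by norm_num : (-1:ℂ) ≠ 0), show c + c = 2*c from by ring, zpow_mul]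
    norm_num
  have h3 : ((-1:ℂ)) ^ (-c) = (-1:ℂ) ^ c := by
    rw [zpow_neg, inv_eq_of_mul_eq_one_right hsq]
  rw [hqi, h1, h2, h3, sub_self, zero_div]

end

lemma abstractKey (u z w s D : ℂ) :
    ((u - u⁻¹)/D) * (((z*w) - (z*w)⁻¹)/D) * s
    = (w * (u * z * s) - w⁻¹ * (u * z⁻¹ * s) - w * (u⁻¹ * z * s) + w⁻¹ * (u⁻¹ * z⁻¹ * s)) / D^2 := by
  ring

section
variable {r : ℕ} {t : ℂ} (hroot : ∀ k : ℤ, t ^ k = 1 ↔ (4*(r:ℤ)) ∣ k) (hr : 3 ≤ r)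
  {qi : ℤ → ℂ}
  (hqi : ∀ n : ℤ, qi n = (t ^ (2 * n) - t ^ (-(2 * n))) / (t ^ (2 : ℤ) - t ^ (-2 : ℤ)))
include hroot hr hqi

lemma key1 (c d e x y : ℤ) : qi (c*y) * qi (x*(y+d)) * t ^ (2*e*y)
    = (t^(2*(x*d)) * t^(2*(c+x+e)*y) - (t^(2*(x*d)))⁻¹ * t^(2*(c-x+e)*y)
       - t^(2*(x*d)) * t^(2*(x+e-c)*y) + (t^(2*(x*d)))⁻¹ * t^(2*(e-c-x)*y))
      / (t^(2:ℤ)-t^(-2:ℤ))^2 := by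
  have ht : t ≠ 0 := ht0' hroot hr
  have hm : ∀ α β : ℤ, t^(α+β) = t^α*t^β := fun α β => zpow_add₀ ht α β
  have eneg : ∀ α : ℤ, t^(-α) = (t^α)⁻¹ := fun α => zpow_neg t α
  have e0 : (2 * e * y) = 2*(e*y) := by ring
  have ev : t ^ (2*(x*(y+d))) = t ^ (2*(x*y)) * t ^ (2*(x*d)) := by
    rw [← hm]; congr 1; ring
  have e1 : t ^ (2*(c+x+e)*y) = t ^ (2*(c*y)) * t ^ (2*(x*y)) * t ^ (2*(e*y)) := by
    rw [← hm, ← hm]; congr 1; ring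
  have e2 : t ^ (2*(c-x+e)*y) = t ^ (2*(c*y)) * (t ^ (2*(x*y)))⁻¹ * t ^ (2*(e*y)) := by
    rw [← eneg, ← hm, ← hm]; congr 1; ring
  have e3 : t ^ (2*(x+e-c)*y) = (t ^ (2*(c*y)))⁻¹ * t ^ (2*(x*y)) * t ^ (2*(e*y)) := by
    rw [← eneg, ← hm, ← hm]; congr 1; ring
  have e4 : t ^ (2*(e-c-x)*y) = (t ^ (2*(c*y)))⁻¹ * (t ^ (2*(x*y)))⁻¹ * t ^ (2*(e*y)) := by
    rw [← eneg, ← eneg, ← hm, ← hm]; congr 1; ring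
  rw [hqi, hqi, e0, eneg (2*(c*y)), eneg (2*(x*(y+d))), ev, e1, e2, e3, e4]
  exact abstractKey _ _ _ _ _

lemma ysum (c d e x : ℤ) :
    ∑ y ∈ Icc (0:ℤ) (2*(r:ℤ)-1), qi (c*y) * qi (x*(y+d)) * t ^ (2*e*y)
    = (t^(2*(x*d)) * ((if (2*(r:ℤ)) ∣ (c+x+e) then ((2*r:ℕ):ℂ) else 0)
          - (if (2*(r:ℤ)) ∣ (x+e-c) then ((2*r:ℕ):ℂ) else 0))
       + (t^(2*(x*d)))⁻¹ * ((if (2*(r:ℤ)) ∣ (e-c-x) then ((2*r:ℕ):ℂ) else 0)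
          - (if (2*(r:ℤ)) ∣ (c-x+e) then ((2*r:ℕ):ℂ) else 0)))
      / (t^(2:ℤ) - t^(-2:ℤ))^2 := by
  rw [Finset.sum_congr rfl (fun y _ => key1 hroot hr hqi c d e x y), ← Finset.sum_div]
  congr 1
  rw [Finset.sum_add_distrib, Finset.sum_sub_distrib, Finset.sum_sub_distrib,
      ← Finset.mul_sum, ← Finset.mul_sum, ← Finset.mul_sum, ← Finset.mul_sum,
      geom hroot hr (c+x+e), geom hroot hr (c-x+e), geom hroot hr (x+e-c), geom hroot hr (e-c-x)]
  ring

end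

end Stmt6Aux
/-- The Gauss-sum identity (Lemma 2 of the paper): for `t = exp(πi/(2r))`,
quantum integers `[n] = (t^{2n}-t^{-2n})/(t^2-t^{-2})` and
`X² = Σ_{j=1}^{r-1} [j]²`, for all integers `a, b, c, d, e`:
`Σ_{x,y=1}^{r-1} [ax] t^{bx²} [cy]([x(y+d)]t^{2ey} + [x(y-d)]t^{-2ey})
  = X² t^{bc²+be²-2de}([a(c+e)]t^{2(be-d)c} + [a(c-e)]t^{-2(be-d)c})`. -/
theorem stmt6 (r : ℕ) (hr : 3 ≤ r) (t : ℂ)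
    (ht : t = Complex.exp (Real.pi * Complex.I / (2 * r)))
    (qi : ℤ → ℂ)
    (hqi : ∀ n : ℤ, qi n = (t ^ (2 * n) - t ^ (-(2 * n))) / (t ^ (2 : ℤ) - t ^ (-2 : ℤ)))
    (X2 : ℂ) (hX2 : X2 = ∑ j ∈ Finset.Icc (1 : ℤ) ((r : ℤ) - 1), qi j ^ 2) :
    ∀ a b c d e : ℤ,
      ∑ x ∈ Finset.Icc (1 : ℤ) ((r : ℤ) - 1), ∑ y ∈ Finset.Icc (1 : ℤ) ((r : ℤ) - 1),
        qi (a * x) * t ^ (b * x ^ 2) * qi (c * y) *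
          (qi (x * (y + d)) * t ^ (2 * e * y) + qi (x * (y - d)) * t ^ (-(2 * e * y)))
      = X2 * t ^ (b * c ^ 2 + b * e ^ 2 - 2 * d * e) *
          (qi (a * (c + e)) * t ^ (2 * (b * e - d) * c) +
           qi (a * (c - e)) * t ^ (-(2 * (b * e - d) * c))) := by
  intro a b c d e
  -- basic root-of-unity facts
  have hroot : ∀ k : ℤ, t ^ k = 1 ↔ (4*(r:ℤ)) ∣ k := by
    intro k
    have hr0 : (r : ℂ) ≠ 0 := Nat.cast_ne_zero.2 (by omega)
    have hπ : (Real.pi : ℂ) ≠ 0 := Complex.ofReal_ne_zero.2 Real.pi_ne_zero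
    have hI := Complex.I_ne_zero
    rw [ht, ← Complex.exp_int_mul, Complex.exp_eq_one_iff]
    constructor
    · rintro ⟨n, hn⟩
      refine ⟨n, ?_⟩
      have h2 : (k:ℂ) = 4 * r * n := by
        field_simp at hn
        have h3 : (k:ℂ) * (Real.pi*Complex.I) = (4*r*n) * (Real.pi*Complex.I) := by
          linear_combination hn * (Real.pi*Complex.I)
        exact mul_right_cancel₀ (mul_ne_zero hπ hI) h3
      exact_mod_cast h2
    · rintro ⟨n, rfl⟩
      refine ⟨n, ?_⟩
      push_cast
      field_simp
      ring
  have hR3 : (3:ℤ) ≤ (r:ℤ) := by exact_mod_cast hr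
  have ht0 : t ≠ 0 := Stmt6Aux.ht0' hroot hr
  have hm : ∀ α β : ℤ, t^(α+β) = t^α*t^β := fun α β => zpow_add₀ ht0 α β
  have eneg : ∀ α : ℤ, t^(-α) = (t^α)⁻¹ := fun α => zpow_neg t α
  have hDne : t ^ (2:ℤ) - t ^ (-2:ℤ) ≠ 0 := Stmt6Aux.hDne hroot hr
  have hqiz := Stmt6Aux.qi_zero hroot hr hqi
  have hqin := Stmt6Aux.qi_neg hroot hr hqi
  have hqip := Stmt6Aux.qi_per hroot hr hqi
  have hqir := Stmt6Aux.qi_rmul hroot hr hqi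
  have htper := Stmt6Aux.tper4 hroot hr
  -- Step A: unfold inner y-sum to full period
  have stepA : ∀ x : ℤ,
      ∑ y ∈ Finset.Icc (1:ℤ) ((r:ℤ)-1),
        qi (c*y) * (qi (x*(y+d)) * t^(2*e*y) + qi (x*(y-d)) * t^(-(2*e*y)))
      = ∑ y ∈ Finset.Icc (0:ℤ) (2*(r:ℤ)-1), qi (c*y) * qi (x*(y+d)) * t^(2*e*y) := by
    intro x
    have key := Stmt6Aux.reflectSplit hR3 (fun y => qi (c*y) * qi (x*(y+d)) * t^(2*e*y))
      (by show qi (c*(0:ℤ)) * qi (x*((0:ℤ)+d)) * t^(2*e*(0:ℤ)) = 0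
          rw [show c*(0:ℤ) = 0 by ring, hqiz]; ring)
      (by show qi (c*(r:ℤ)) * qi (x*((r:ℤ)+d)) * t^(2*e*(r:ℤ)) = 0
          rw [show c*(r:ℤ) = (r:ℤ)*c by ring, hqir]; ring)
    rw [← key]
    refine Finset.sum_congr rfl fun y hy => ?_
    show qi (c*y) * (qi (x*(y+d)) * t^(2*e*y) + qi (x*(y-d)) * t^(-(2*e*y)))
      = qi (c*y) * qi (x*(y+d)) * t^(2*e*y)
        + qi (c*(2*(r:ℤ)-y)) * qi (x*((2*(r:ℤ)-y)+d)) * t^(2*e*(2*(r:ℤ)-y))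
    have f1 : qi (c*(2*(r:ℤ)-y)) = - qi (c*y) := by
      rw [show c*(2*(r:ℤ)-y) = -(c*y) + 2*(r:ℤ)*c by ring, hqip, hqin]
    have f2 : qi (x*((2*(r:ℤ)-y)+d)) = - qi (x*(y-d)) := by
      rw [show x*((2*(r:ℤ)-y)+d) = -(x*(y-d)) + 2*(r:ℤ)*x by ring, hqip, hqin]
    have f3 : t^(2*e*(2*(r:ℤ)-y)) = t^(-(2*e*y)) := by
      rw [show 2*e*(2*(r:ℤ)-y) = -(2*e*y) + 4*(r:ℤ)*e by ring, htper]
    rw [f1, f2, f3]; ring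
  -- Step 1: LHS as single sum over x
  have step1 : ∑ x ∈ Finset.Icc (1:ℤ) ((r:ℤ)-1), ∑ y ∈ Finset.Icc (1:ℤ) ((r:ℤ)-1),
        qi (a * x) * t ^ (b * x ^ 2) * qi (c * y) *
          (qi (x * (y + d)) * t ^ (2 * e * y) + qi (x * (y - d)) * t ^ (-(2 * e * y)))
      = ∑ x ∈ Finset.Icc (1:ℤ) ((r:ℤ)-1), qi (a*x) * t^(b*x^2) *
          (∑ y ∈ Finset.Icc (0:ℤ) (2*(r:ℤ)-1), qi (c*y) * qi (x*(y+d)) * t^(2*e*y)) := by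
    refine Finset.sum_congr rfl fun x hx => ?_
    rw [← stepA x, Finset.mul_sum]
    refine Finset.sum_congr rfl fun y hy => ?_
    ring
  rw [step1]
  -- Step B : double the x-range
  have hGflip : ∀ x : ℤ,
      qi (a*(2*(r:ℤ)-x)) * t^(b*(2*(r:ℤ)-x)^2) *
        (∑ y ∈ Finset.Icc (0:ℤ) (2*(r:ℤ)-1), qi (c*y) * qi ((2*(r:ℤ)-x)*(y+d)) * t^(2*e*y))
      = qi (a*x) * t^(b*x^2) *
        (∑ y ∈ Finset.Icc (0:ℤ) (2*(r:ℤ)-1), qi (c*y) * qi (x*(y+d)) * t^(2*e*y)) := by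
    intro x
    have g1 : qi (a*(2*(r:ℤ)-x)) = - qi (a*x) := by
      rw [show a*(2*(r:ℤ)-x) = -(a*x) + 2*(r:ℤ)*a by ring, hqip, hqin]
    have g2 : t^(b*(2*(r:ℤ)-x)^2) = t^(b*x^2) := by
      rw [show b*(2*(r:ℤ)-x)^2 = b*x^2 + 4*(r:ℤ)*(b*(r:ℤ) - b*x) by ring, htper]
    have g3 : ∑ y ∈ Finset.Icc (0:ℤ) (2*(r:ℤ)-1), qi (c*y) * qi ((2*(r:ℤ)-x)*(y+d)) * t^(2*e*y)
        = - ∑ y ∈ Finset.Icc (0:ℤ) (2*(r:ℤ)-1), qi (c*y) * qi (x*(y+d)) * t^(2*e*y) := by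
      rw [← Finset.sum_neg_distrib]
      refine Finset.sum_congr rfl fun y hy => ?_
      rw [show (2*(r:ℤ)-x)*(y+d) = -(x*(y+d)) + 2*(r:ℤ)*(y+d) by ring, hqip, hqin]
      ring
    rw [g1, g2, g3]; ring
  have stepB := Stmt6Aux.reflectSplit hR3
      (fun x => qi (a*x) * t^(b*x^2) *
        (∑ y ∈ Finset.Icc (0:ℤ) (2*(r:ℤ)-1), qi (c*y) * qi (x*(y+d)) * t^(2*e*y)))
      (by show qi (a*(0:ℤ)) * t^(b*(0:ℤ)^2) *
            (∑ y ∈ Finset.Icc (0:ℤ) (2*(r:ℤ)-1), qi (c*y) * qi ((0:ℤ)*(y+d)) * t^(2*e*y)) = 0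
          rw [show a*(0:ℤ) = 0 by ring, hqiz]; ring)
      (by show qi (a*(r:ℤ)) * t^(b*((r:ℤ))^2) *
            (∑ y ∈ Finset.Icc (0:ℤ) (2*(r:ℤ)-1), qi (c*y) * qi ((r:ℤ)*(y+d)) * t^(2*e*y)) = 0
          rw [show a*(r:ℤ) = (r:ℤ)*a by ring, hqir]; ring)
  have stepB2 : ∑ x ∈ Finset.Icc (0:ℤ) (2*(r:ℤ)-1), qi (a*x) * t^(b*x^2) *
        (∑ y ∈ Finset.Icc (0:ℤ) (2*(r:ℤ)-1), qi (c*y) * qi (x*(y+d)) * t^(2*e*y))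
      = 2 * ∑ x ∈ Finset.Icc (1:ℤ) ((r:ℤ)-1), qi (a*x) * t^(b*x^2) *
        (∑ y ∈ Finset.Icc (0:ℤ) (2*(r:ℤ)-1), qi (c*y) * qi (x*(y+d)) * t^(2*e*y)) := by
    rw [← stepB, Finset.mul_sum]
    refine Finset.sum_congr rfl fun x hx => ?_
    show qi (a*x) * t^(b*x^2) *
          (∑ y ∈ Finset.Icc (0:ℤ) (2*(r:ℤ)-1), qi (c*y) * qi (x*(y+d)) * t^(2*e*y))
        + qi (a*(2*(r:ℤ)-x)) * t^(b*(2*(r:ℤ)-x)^2) *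
          (∑ y ∈ Finset.Icc (0:ℤ) (2*(r:ℤ)-1), qi (c*y) * qi ((2*(r:ℤ)-x)*(y+d)) * t^(2*e*y))
      = 2 * (qi (a*x) * t^(b*x^2) *
          (∑ y ∈ Finset.Icc (0:ℤ) (2*(r:ℤ)-1), qi (c*y) * qi (x*(y+d)) * t^(2*e*y)))
    rw [hGflip x]; ring
  -- pick instances
  have hRpos : (0:ℤ) < 2*(r:ℤ) := by omega
  have hperF1 : ∀ x:ℤ, qi (a*(x+2*(r:ℤ))) * t^(b*(x+2*(r:ℤ))^2) * t^(2*((x+2*(r:ℤ))*d))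
      = qi (a*x) * t^(b*x^2) * t^(2*(x*d)) := by
    intro x
    have p1 : qi (a*(x+2*(r:ℤ))) = qi (a*x) := by
      rw [show a*(x+2*(r:ℤ)) = a*x + 2*(r:ℤ)*a by ring, hqip]
    have p2 : t^(b*(x+2*(r:ℤ))^2) = t^(b*x^2) := by
      rw [show b*(x+2*(r:ℤ))^2 = b*x^2 + 4*(r:ℤ)*(b*x + b*(r:ℤ)) by ring, htper]
    have p3 : t^(2*((x+2*(r:ℤ))*d)) = t^(2*(x*d)) := by
      rw [show 2*((x+2*(r:ℤ))*d) = 2*(x*d) + 4*(r:ℤ)*d by ring, htper]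
    rw [p1, p2, p3]
  have hperF2 : ∀ x:ℤ, qi (a*(x+2*(r:ℤ))) * t^(b*(x+2*(r:ℤ))^2) * (t^(2*((x+2*(r:ℤ))*d)))⁻¹
      = qi (a*x) * t^(b*x^2) * (t^(2*(x*d)))⁻¹ := by
    intro x
    have p1 : qi (a*(x+2*(r:ℤ))) = qi (a*x) := by
      rw [show a*(x+2*(r:ℤ)) = a*x + 2*(r:ℤ)*a by ring, hqip]
    have p2 : t^(b*(x+2*(r:ℤ))^2) = t^(b*x^2) := by
      rw [show b*(x+2*(r:ℤ))^2 = b*x^2 + 4*(r:ℤ)*(b*x + b*(r:ℤ)) by ring, htper]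
    have p3 : t^(2*((x+2*(r:ℤ))*d)) = t^(2*(x*d)) := by
      rw [show 2*((x+2*(r:ℤ))*d) = 2*(x*d) + 4*(r:ℤ)*d by ring, htper]
    rw [p1, p2, p3]
  have pickA : ∀ x₀:ℤ, ∑ x ∈ Finset.Icc (0:ℤ) (2*(r:ℤ)-1),
      qi (a*x) * t^(b*x^2) * t^(2*(x*d)) * (if (2*(r:ℤ)) ∣ (x - x₀) then (1:ℂ) else 0)
      = qi (a*x₀) * t^(b*x₀^2) * t^(2*(x₀*d)) := fun x₀ =>
    Stmt6Aux.pick hRpos (fun x => qi (a*x) * t^(b*x^2) * t^(2*(x*d))) hperF1 x₀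
  have pickB : ∀ x₀:ℤ, ∑ x ∈ Finset.Icc (0:ℤ) (2*(r:ℤ)-1),
      qi (a*x) * t^(b*x^2) * (t^(2*(x*d)))⁻¹ * (if (2*(r:ℤ)) ∣ (x - x₀) then (1:ℂ) else 0)
      = qi (a*x₀) * t^(b*x₀^2) * (t^(2*(x₀*d)))⁻¹ := fun x₀ =>
    Stmt6Aux.pick hRpos (fun x => qi (a*x) * t^(b*x^2) * (t^(2*(x*d)))⁻¹) hperF2 x₀
  -- Step C: evaluate the full x-sum
  have hif : ∀ (P : Prop) (inst : Decidable P),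
      (if P then ((2*r:ℕ):ℂ) else 0) = ((2*r:ℕ):ℂ) * (if P then (1:ℂ) else 0) := by
    intro P inst; split <;> ring
  have stepC : ∑ x ∈ Finset.Icc (0:ℤ) (2*(r:ℤ)-1), qi (a*x) * t^(b*x^2) *
        (∑ y ∈ Finset.Icc (0:ℤ) (2*(r:ℤ)-1), qi (c*y) * qi (x*(y+d)) * t^(2*e*y))
      = ((2*r:ℕ):ℂ) / (t^(2:ℤ) - t^(-2:ℤ))^2 *
        (qi (a*(-(c+e))) * t^(b*(-(c+e))^2) * t^(2*((-(c+e))*d))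
         - qi (a*(c-e)) * t^(b*(c-e)^2) * t^(2*((c-e)*d))
         + qi (a*(e-c)) * t^(b*(e-c)^2) * (t^(2*((e-c)*d)))⁻¹
         - qi (a*(c+e)) * t^(b*(c+e)^2) * (t^(2*((c+e)*d)))⁻¹) := by
    calc ∑ x ∈ Finset.Icc (0:ℤ) (2*(r:ℤ)-1), qi (a*x) * t^(b*x^2) *
          (∑ y ∈ Finset.Icc (0:ℤ) (2*(r:ℤ)-1), qi (c*y) * qi (x*(y+d)) * t^(2*e*y))
        = ∑ x ∈ Finset.Icc (0:ℤ) (2*(r:ℤ)-1), (((2*r:ℕ):ℂ) / (t^(2:ℤ) - t^(-2:ℤ))^2 *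
            (qi (a*x) * t^(b*x^2) * t^(2*(x*d)) * (if (2*(r:ℤ)) ∣ (x - -(c+e)) then (1:ℂ) else 0)
             - qi (a*x) * t^(b*x^2) * t^(2*(x*d)) * (if (2*(r:ℤ)) ∣ (x - (c-e)) then (1:ℂ) else 0)
             + qi (a*x) * t^(b*x^2) * (t^(2*(x*d)))⁻¹ * (if (2*(r:ℤ)) ∣ (x - (e-c)) then (1:ℂ) else 0)
             - qi (a*x) * t^(b*x^2) * (t^(2*(x*d)))⁻¹ * (if (2*(r:ℤ)) ∣ (x - (c+e)) then (1:ℂ) else 0))) := by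
          refine Finset.sum_congr rfl fun x hx => ?_
          rw [Stmt6Aux.ysum hroot hr hqi c d e x]
          rw [show c+x+e = x - -(c+e) by ring, show x+e-c = x - (c-e) by ring,
              show e-c-x = -(x - (e-c)) by ring, show c-x+e = -(x - (c+e)) by ring]
          simp only [dvd_neg]
          simp only [hif]
          ring
      _ = ((2*r:ℕ):ℂ) / (t^(2:ℤ) - t^(-2:ℤ))^2 *
          ((∑ x ∈ Finset.Icc (0:ℤ) (2*(r:ℤ)-1),
              qi (a*x) * t^(b*x^2) * t^(2*(x*d)) * (if (2*(r:ℤ)) ∣ (x - -(c+e)) then (1:ℂ) else 0))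
           - (∑ x ∈ Finset.Icc (0:ℤ) (2*(r:ℤ)-1),
              qi (a*x) * t^(b*x^2) * t^(2*(x*d)) * (if (2*(r:ℤ)) ∣ (x - (c-e)) then (1:ℂ) else 0))
           + (∑ x ∈ Finset.Icc (0:ℤ) (2*(r:ℤ)-1),
              qi (a*x) * t^(b*x^2) * (t^(2*(x*d)))⁻¹ * (if (2*(r:ℤ)) ∣ (x - (e-c)) then (1:ℂ) else 0))
           - (∑ x ∈ Finset.Icc (0:ℤ) (2*(r:ℤ)-1),
              qi (a*x) * t^(b*x^2) * (t^(2*(x*d)))⁻¹ * (if (2*(r:ℤ)) ∣ (x - (c+e)) then (1:ℂ) else 0))) := by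
          rw [← Finset.mul_sum]
          congr 1
          rw [Finset.sum_sub_distrib, Finset.sum_add_distrib, Finset.sum_sub_distrib]
      _ = _ := by
          rw [pickA (-(c+e)), pickA (c-e), pickB (e-c), pickB (c+e)]
  -- X2 evaluation
  have hnd2 : ¬ (2*(r:ℤ)) ∣ (2:ℤ) := by
    intro hdvd
    have := Int.le_of_dvd (by norm_num) hdvd
    omega
  have hnd2' : ¬ (2*(r:ℤ)) ∣ (-2:ℤ) := by
    intro hdvd
    exact hnd2 (dvd_neg.1 hdvd)
  have habs2 : ∀ j:ℤ, qi j ^ 2 = (t^(2*2*j) - 2 + t^(2*(-2)*j)) / (t^(2:ℤ) - t^(-2:ℤ))^2 := by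
    intro j
    have eu : t^(2*2*j) = t^(2*j) * t^(2*j) := by rw [← hm]; congr 1; ring
    have eiu : t^(2*(-2)*j) = (t^(2*j))⁻¹ * (t^(2*j))⁻¹ := by
      rw [← eneg, ← hm]; congr 1; ring
    rw [hqi, eneg (2*j), div_pow, eu, eiu]
    congr 1
    linear_combination (-2:ℂ) * mul_inv_cancel₀ (zpow_ne_zero (2*j) ht0)
  have hcardJ : (Finset.Icc (0:ℤ) (2*(r:ℤ)-1)).card = 2*r := by
    rw [Int.card_Icc]
    omega
  have hX2J : ∑ j ∈ Finset.Icc (0:ℤ) (2*(r:ℤ)-1), qi j ^ 2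
      = (0 - ((2*r:ℕ):ℂ)*2 + 0) / (t^(2:ℤ) - t^(-2:ℤ))^2 := by
    calc ∑ j ∈ Finset.Icc (0:ℤ) (2*(r:ℤ)-1), qi j ^ 2
        = ∑ j ∈ Finset.Icc (0:ℤ) (2*(r:ℤ)-1),
            ((t^(2*2*j) - 2 + t^(2*(-2)*j)) / (t^(2:ℤ) - t^(-2:ℤ))^2) :=
          Finset.sum_congr rfl fun j _ => habs2 j
      _ = ((∑ j ∈ Finset.Icc (0:ℤ) (2*(r:ℤ)-1), t^(2*2*j))
            - (∑ j ∈ Finset.Icc (0:ℤ) (2*(r:ℤ)-1), (2:ℂ))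
            + (∑ j ∈ Finset.Icc (0:ℤ) (2*(r:ℤ)-1), t^(2*(-2)*j))) / (t^(2:ℤ) - t^(-2:ℤ))^2 := by
          rw [← Finset.sum_div, Finset.sum_add_distrib, Finset.sum_sub_distrib]
      _ = _ := by
          rw [Stmt6Aux.geom hroot hr 2, Stmt6Aux.geom hroot hr (-2), if_neg hnd2, if_neg hnd2',
              Finset.sum_const, hcardJ, nsmul_eq_mul]
  have hX2flip : ∀ j:ℤ, qi (2*(r:ℤ) - j) ^ 2 = qi j ^ 2 := by
    intro j
    rw [show 2*(r:ℤ)-j = -j + 2*(r:ℤ)*1 by ring, hqip, hqin]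
    ring
  have hX2split := Stmt6Aux.reflectSplit hR3 (fun j => qi j ^ 2)
    (by show qi (0:ℤ) ^ 2 = 0
        rw [hqiz]; ring)
    (by show qi ((r:ℤ)) ^ 2 = 0
        rw [show ((r:ℤ)) = (r:ℤ)*1 by ring, hqir]; ring)
  have hX2v : X2 = -((2*r:ℕ):ℂ) / (t^(2:ℤ) - t^(-2:ℤ))^2 := by
    have h2X2 : (2:ℂ) * X2 = (0 - ((2*r:ℕ):ℂ)*2 + 0) / (t^(2:ℤ) - t^(-2:ℤ))^2 := by
      rw [hX2, ← hX2J, ← hX2split, Finset.mul_sum]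
      refine Finset.sum_congr rfl fun j hj => ?_
      show (2:ℂ) * qi j ^ 2 = qi j ^ 2 + qi (2*(r:ℤ) - j) ^ 2
      rw [hX2flip j]; ring
    have h2 : (2:ℂ) * X2 = 2 * (-((2*r:ℕ):ℂ) / (t^(2:ℤ) - t^(-2:ℤ))^2) := by
      rw [h2X2]; ring
    exact mul_left_cancel₀ (by norm_num : (2:ℂ) ≠ 0) h2
  -- final assembly
  have q1 : qi (a*(-(c+e))) = - qi (a*(c+e)) := by
    rw [show a*(-(c+e)) = -(a*(c+e)) by ring, hqin]
  have q2 : t^(b*(-(c+e))^2) = t^(b*(c+e)^2) := by congr 1; ring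
  have q3 : t^(2*((-(c+e))*d)) = (t^(2*((c+e)*d)))⁻¹ := by
    rw [show 2*((-(c+e))*d) = -(2*((c+e)*d)) by ring, eneg]
  have q4 : qi (a*(e-c)) = - qi (a*(c-e)) := by
    rw [show a*(e-c) = -(a*(c-e)) by ring, hqin]
  have q5 : t^(b*(e-c)^2) = t^(b*(c-e)^2) := by congr 1; ring
  have q6 : (t^(2*((e-c)*d)))⁻¹ = t^(2*((c-e)*d)) := by
    rw [show 2*((e-c)*d) = -(2*((c-e)*d)) by ring, eneg, inv_inv]
  have T1 : t^(b*c^2+b*e^2-2*d*e) * t^(2*(b*e-d)*c) = t^(b*(c+e)^2) * (t^(2*((c+e)*d)))⁻¹ := by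
    rw [← eneg, ← hm, ← hm]; congr 1; ring
  have T2 : t^(b*c^2+b*e^2-2*d*e) * t^(-(2*(b*e-d)*c)) = t^(b*(c-e)^2) * t^(2*((c-e)*d)) := by
    rw [← hm, ← hm]; congr 1; ring
  have hhalf : ∑ x ∈ Finset.Icc (1:ℤ) ((r:ℤ)-1), qi (a*x) * t^(b*x^2) *
        (∑ y ∈ Finset.Icc (0:ℤ) (2*(r:ℤ)-1), qi (c*y) * qi (x*(y+d)) * t^(2*e*y))
      = (∑ x ∈ Finset.Icc (0:ℤ) (2*(r:ℤ)-1), qi (a*x) * t^(b*x^2) *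
        (∑ y ∈ Finset.Icc (0:ℤ) (2*(r:ℤ)-1), qi (c*y) * qi (x*(y+d)) * t^(2*e*y))) / 2 := by
    rw [stepB2]; ring
  rw [hhalf, stepC, q1, q2, q3, q4, q5, q6, hX2v]
  linear_combination ((((2*r:ℕ):ℂ) / (t^(2:ℤ) - t^(-2:ℤ))^2) * qi (a*(c+e))) * T1
    + ((((2*r:ℕ):ℂ) / (t^(2:ℤ) - t^(-2:ℤ))^2) * qi (a*(c-e))) * T2
end

section
/- Fix an integer r ≥ 3, let t = exp(πi/(2r)), let [n] = (t^{2n} - t^{-2n})/(t^2 - t^{-2}) for n ∈ ℤ, and let X² = Σ_{j=1}^{r-1} [j]². Then for all integers m, k, p, q: Σ_{x=1}^{r-1} Σ_{y=1}^{r-1} [m·y]·[y·x]·([k(x+q)]·t^{-2px} + [k(x-q)]·t^{2px}) = X²·([k(m+q)]·t^{-2mp} + [k(m-q)]·t^{2mp}). -/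
open Finset

namespace Stmt7Aux


lemma key_frac (w A : ℂ) (hw0 : w ≠ 0) (hwm1 : w - 1 ≠ 0)
    (hA0 : A ≠ 0) (hA : A^2 * w^2 = 1) :
    w * ((A - 1)/(w-1)) + w⁻¹ * ((A⁻¹-1)/(w⁻¹-1)) = -1 - A*w := by
  have h1w : (1:ℂ) - w ≠ 0 := fun h => hwm1 (by linear_combination -h)
  have h2 : w⁻¹ * ((A⁻¹-1)/(w⁻¹-1)) = (1-A)/(A*(1-w)) := by
    rw [inv_eq_one_div, inv_eq_one_div]
    rw [div_sub' hw0, div_sub' hA0]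
    field_simp
  rw [h2]
  field_simp
  linear_combination (1 - w) * hA

lemma geom_helper {w : ℂ} (n : ℕ) (hw0 : w ≠ 0) (hw1 : w ≠ 1)
    (hw : w ^ (2*n+4) = 1) :
    ∑ i ∈ range (n+1), (w ^ (i+1) + (w ^ (i+1))⁻¹) = -1 - w^(n+2) := by
  have hA0 : w ^ (n+1) ≠ 0 := pow_ne_zero _ hw0
  have hA : (w^(n+1))^2 * w^2 = 1 := by rw [← pow_mul, ← pow_add]; convert hw using 2; ring
  have hwm1 : w - 1 ≠ 0 := sub_ne_zero.mpr hw1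
  have hwinv : w⁻¹ ≠ 1 := by intro h; apply hw1; field_simp at h; exact h.symm
  have h1 : ∑ i ∈ range (n+1), w ^ (i+1) = w * ((w^(n+1) - 1)/(w-1)) := by
    rw [← geom_sum_eq hw1, Finset.mul_sum]
    exact Finset.sum_congr rfl fun i _ => by ring
  have h2 : ∑ i ∈ range (n+1), (w ^ (i+1))⁻¹ = w⁻¹ * (((w^(n+1))⁻¹ - 1)/(w⁻¹-1)) := by
    have he : ∀ i, (w ^ (i+1))⁻¹ = (w⁻¹) ^ (i+1) := fun i => by rw [inv_pow]
    simp_rw [he]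
    have h' : ∑ i ∈ range (n+1), (w⁻¹) ^ (i+1) = w⁻¹ * (((w⁻¹)^(n+1) - 1)/(w⁻¹-1)) := by
      rw [← geom_sum_eq hwinv, Finset.mul_sum]
      exact Finset.sum_congr rfl fun i _ => by ring
    rw [h', inv_pow]
  rw [Finset.sum_add_distrib, h1, h2]
  have hr : w^(n+2) = w^(n+1) * w := by ring
  rw [hr]
  exact key_frac w _ hw0 hwm1 hA0 hA


lemma reindex (N : ℕ) (f : ℤ → ℂ) :
    ∑ y ∈ Icc (1:ℤ) (N:ℤ), f y = ∑ i ∈ range N, f ((i:ℤ)+1) := by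
  refine Finset.sum_nbij' (fun y => (y-1).toNat) (fun i => (i:ℤ)+1) ?_ ?_ ?_ ?_ ?_
  · intro y hy; simp only [mem_Icc] at hy; simp only [mem_range]; omega
  · intro i hi; simp only [mem_range] at hi; simp only [mem_Icc]; omega
  · intro y hy; simp only [mem_Icc] at hy; omega
  · intro i hi; simp only [mem_range] at hi; simp only [Int.add_sub_cancel, Int.toNat_natCast]
  · intro y hy; simp only [mem_Icc] at hy
    congr 1; omega

lemma Slem (r : ℕ) (hr : 3 ≤ r) (ζ : ℂ) (hζ0 : ζ ≠ 0)
    (hord : ∀ a : ℤ, ζ ^ a = 1 ↔ (2*(r:ℤ)) ∣ a) (c : ℤ) :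
    ∑ y ∈ Icc (1:ℤ) ((r:ℤ)-1), (ζ^(c*y) + ζ^(-(c*y)))
      = (if (2*(r:ℤ)) ∣ c then (2*r:ℂ) else 0) - ζ^((r:ℤ)*c) - 1 := by
  obtain ⟨n, rfl⟩ : ∃ n, r = n + 3 := ⟨r - 3, by omega⟩
  set R : ℕ := n + 3 with hR
  have hIcc : ((R:ℤ) - 1) = ((R - 1 : ℕ) : ℤ) := by push_cast; omega
  rw [hIcc, reindex]
  by_cases hd : (2*(R:ℤ)) ∣ c
  · rw [if_pos hd]
    have hrc : ζ ^ ((R:ℤ)*c) = 1 := by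
      rw [hord]; exact Dvd.dvd.mul_left hd _
    have hterm : ∀ i ∈ range (R-1), ζ^(c*((i:ℤ)+1)) + ζ^(-(c*((i:ℤ)+1))) = 2 := by
      intro i _
      have h1 : ζ^(c*((i:ℤ)+1)) = 1 := by rw [hord]; exact Dvd.dvd.mul_right hd _
      have h2 : ζ^(-(c*((i:ℤ)+1))) = 1 := by rw [hord]; exact dvd_neg.mpr (Dvd.dvd.mul_right hd _)
      rw [h1, h2]; norm_num
    rw [Finset.sum_congr rfl hterm, Finset.sum_const, card_range, hrc]
    have h21 : R - 1 = n + 2 := by omega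
    rw [h21, nsmul_eq_mul, hR]
    push_cast
    ring
  · rw [if_neg hd]
    set w : ℂ := ζ ^ c with hw
    have hw0 : w ≠ 0 := zpow_ne_zero _ hζ0
    have hw1 : w ≠ 1 := fun h => hd ((hord c).mp h)
    have hwp : w ^ (2*(n+1)+4) = 1 := by
      rw [hw, ← zpow_natCast, ← zpow_mul, hord]
      push_cast
      exact ⟨c, by rw [hR]; push_cast; ring⟩
    have hterm : ∀ i ∈ range (R-1), ζ^(c*((i:ℤ)+1)) + ζ^(-(c*((i:ℤ)+1)))
        = w ^ (i+1) + (w ^ (i+1))⁻¹ := by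
      intro i _
      rw [hw, ← zpow_natCast (ζ^c), ← zpow_mul, ← zpow_neg]
      push_cast
      rw [mul_comm (c : ℤ)]
    have hcard : R - 1 = (n+1) + 1 := by omega
    rw [Finset.sum_congr rfl hterm]
    rw [hcard] at *
    rw [geom_helper (n+1) hw0 hw1 hwp]
    have : ζ ^ ((R:ℤ)*c) = w ^ ((n+1)+2) := by
      rw [hw, ← zpow_natCast (ζ^c), ← zpow_mul]
      congr 1
      push_cast [hR]
      ring
    rw [this]
    ring

lemma innerSum (r : ℕ) (hr : 3 ≤ r) (ζ : ℂ) (hζ0 : ζ ≠ 0)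
    (hord : ∀ a : ℤ, ζ ^ a = 1 ↔ (2*(r:ℤ)) ∣ a)
    (d : ℂ) (hdne : d ≠ 0) (qi : ℤ → ℂ)
    (hqi' : ∀ n : ℤ, qi n = (ζ^n - ζ^(-n))/d) (a b : ℤ) :
    ∑ y ∈ Icc (1:ℤ) ((r:ℤ)-1), qi (a*y) * qi (y*b)
      = 2*(r:ℂ)/d^2 * ((if (2*(r:ℤ)) ∣ a+b then (1:ℂ) else 0)
          - (if (2*(r:ℤ)) ∣ a-b then (1:ℂ) else 0)) := by
  have hterm : ∀ y ∈ Icc (1:ℤ) ((r:ℤ)-1), qi (a*y) * qi (y*b)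
      = ((ζ^((a+b)*y) + ζ^(-((a+b)*y))) - (ζ^((a-b)*y) + ζ^(-((a-b)*y))))/d^2 := by
    intro y _
    have e1 : ζ^((a+b)*y) = ζ^(a*y) * ζ^(y*b) := by rw [← zpow_add₀ hζ0]; congr 1; ring
    have e2 : ζ^(-((a+b)*y)) = ζ^(-(a*y)) * ζ^(-(y*b)) := by rw [← zpow_add₀ hζ0]; congr 1; ring
    have e3 : ζ^((a-b)*y) = ζ^(a*y) * ζ^(-(y*b)) := by rw [← zpow_add₀ hζ0]; congr 1; ring
    have e4 : ζ^(-((a-b)*y)) = ζ^(-(a*y)) * ζ^(y*b) := by rw [← zpow_add₀ hζ0]; congr 1; ring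
    have hA : ζ^(a*y) ≠ 0 := zpow_ne_zero _ hζ0
    have hB : ζ^(y*b) ≠ 0 := zpow_ne_zero _ hζ0
    rw [hqi', hqi', e1, e2, e3, e4, zpow_neg, zpow_neg]
    field_simp
    ring
  rw [Finset.sum_congr rfl hterm, ← Finset.sum_div, Finset.sum_sub_distrib,
    Slem r hr ζ hζ0 hord (a+b), Slem r hr ζ hζ0 hord (a-b)]
  have hre : ζ^((r:ℤ)*(a+b)) = ζ^((r:ℤ)*(a-b)) := by
    have h2rb : ζ^(2*(r:ℤ)*b) = 1 := (hord _).mpr ⟨b, by ring⟩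
    calc ζ^((r:ℤ)*(a+b)) = ζ^((r:ℤ)*(a-b)) * ζ^(2*(r:ℤ)*b) := by
          rw [← zpow_add₀ hζ0]; congr 1; ring
      _ = ζ^((r:ℤ)*(a-b)) := by rw [h2rb, mul_one]
  rw [hre]
  by_cases h1 : (2*(r:ℤ)) ∣ a+b <;> by_cases h2 : (2*(r:ℤ)) ∣ a-b <;>
    simp only [h1, h2, if_pos, if_neg, if_true, if_false] <;> field_simp <;> ring

lemma deltaSum (r : ℕ) (hr : 3 ≤ r) (F : ℤ → ℂ)
    (Fper : ∀ x, F (x + 2*(r:ℤ)) = F x) (Fodd : ∀ x, F (-x) = -F x)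
    (Fr : F (r:ℤ) = 0) (m : ℤ) :
    ∑ x ∈ Icc (1:ℤ) ((r:ℤ)-1),
      ((if (2*(r:ℤ)) ∣ m+x then (1:ℂ) else 0) - (if (2*(r:ℤ)) ∣ m-x then (1:ℂ) else 0)) * F x
      = -F m := by
  have hRpos : (0:ℤ) < 2*(r:ℤ) := by positivity
  have Fper' : ∀ x, F (x - 2*(r:ℤ)) = F x := fun x => by
    have := Fper (x - 2*(r:ℤ)); rw [sub_add_cancel] at this; exact this.symm
  have Fshift : ∀ (s : ℤ) (x : ℤ), F (x + 2*(r:ℤ)*s) = F x := by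
    intro s
    induction s using Int.induction_on with
    | zero => intro x; rw [mul_zero, add_zero]
    | succ s ih => intro x
                   have : x + 2*(r:ℤ)*(s+1) = (x + 2*(r:ℤ)*s) + 2*(r:ℤ) := by ring
                   rw [this, Fper, ih]
    | pred s ih => intro x
                   have : x + 2*(r:ℤ)*(-s-1) = (x + 2*(r:ℤ)*(-s)) - 2*(r:ℤ) := by ring
                   rw [this, Fper', ih]
  have F0 : F 0 = 0 := by have := Fodd 0; rw [neg_zero] at this; linear_combination this / 2
  have notdvd : ∀ z : ℤ, 0 < z → z < 2*(r:ℤ) → ¬ (2*(r:ℤ)) ∣ z := by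
    intro z h1 h2 hdvd
    have := Int.le_of_dvd h1 hdvd
    omega
  set c : ℤ := m % (2*(r:ℤ)) with hcdef
  have hc0 : 0 ≤ c := Int.emod_nonneg m (by omega)
  have hc2 : c < 2*(r:ℤ) := Int.emod_lt_of_pos m hRpos
  have hmc : m = 2*(r:ℤ)*(m / (2*(r:ℤ))) + c := by
    rw [hcdef]; exact (Int.mul_ediv_add_emod m (2*(r:ℤ))).symm
  have hFm : F m = F c := by
    conv_lhs => rw [hmc]
    rw [add_comm, Fshift]
  have hd1 : ∀ x : ℤ, ((2*(r:ℤ)) ∣ m + x) ↔ ((2*(r:ℤ)) ∣ c + x) := by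
    intro x
    conv_lhs => rw [hmc]
    rw [add_assoc]
    exact dvd_add_right (Dvd.intro _ rfl)
  have hd2 : ∀ x : ℤ, ((2*(r:ℤ)) ∣ m - x) ↔ ((2*(r:ℤ)) ∣ c - x) := by
    intro x
    conv_lhs => rw [hmc]
    rw [add_sub_assoc]
    exact dvd_add_right (Dvd.intro _ rfl)
  have hsum : ∀ x : ℤ,
      ((if (2*(r:ℤ)) ∣ m+x then (1:ℂ) else 0) - (if (2*(r:ℤ)) ∣ m-x then (1:ℂ) else 0))
      = ((if (2*(r:ℤ)) ∣ c+x then (1:ℂ) else 0) - (if (2*(r:ℤ)) ∣ c-x then (1:ℂ) else 0)) := by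
    intro x
    rw [if_congr (hd1 x) rfl rfl, if_congr (hd2 x) rfl rfl]
  simp_rw [hsum, hFm]
  have hcases : c = 0 ∨ c = (r:ℤ) ∨ (1 ≤ c ∧ c ≤ (r:ℤ)-1) ∨ ((r:ℤ)+1 ≤ c ∧ c ≤ 2*(r:ℤ)-1) := by
    omega
  rcases hcases with h | h | ⟨h1, h2⟩ | ⟨h1, h2⟩
  · rw [h, F0, neg_zero]
    apply Finset.sum_eq_zero
    intro x hx
    rw [mem_Icc] at hx
    rw [if_neg, if_neg]
    · ring
    · rw [zero_sub, dvd_neg]; exact notdvd x (by omega) (by omega)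
    · rw [zero_add]; exact notdvd x (by omega) (by omega)
  · rw [h, Fr, neg_zero]
    apply Finset.sum_eq_zero
    intro x hx
    rw [mem_Icc] at hx
    rw [if_neg, if_neg]
    · ring
    · exact notdvd _ (by omega) (by omega)
    · exact notdvd _ (by omega) (by omega)
  · have step : ∀ x ∈ Icc (1:ℤ) ((r:ℤ)-1),
        ((if (2*(r:ℤ)) ∣ c+x then (1:ℂ) else 0) - (if (2*(r:ℤ)) ∣ c-x then (1:ℂ) else 0)) * F x
        = if c = x then -F x else 0 := by
      intro x hx
      rw [mem_Icc] at hx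
      by_cases hxc : c = x
      · subst hxc
        have hpx : (2*(r:ℤ)) ∣ c - c := by rw [sub_self]; exact dvd_zero _
        rw [if_pos hpx, if_neg]
        · rw [if_pos rfl]; ring
        · exact notdvd _ (by omega) (by omega)
      · rw [if_neg hxc, if_neg, if_neg]
        · ring
        · intro hdd
          rcases (lt_or_gt_of_ne (fun h => hxc h.symm) : x < c ∨ x > c) with hlt | hgt
          · exact notdvd _ (by omega) (by omega) hdd
          · rw [← dvd_neg] at hdd; exact notdvd _ (by omega) (by omega) hdd
        · exact notdvd _ (by omega) (by omega)
    rw [Finset.sum_congr rfl step, Finset.sum_ite_eq, if_pos (by rw [mem_Icc]; omega)]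
  · have hx0 : 2*(r:ℤ) - c ∈ Icc (1:ℤ) ((r:ℤ)-1) := by rw [mem_Icc]; omega
    have step : ∀ x ∈ Icc (1:ℤ) ((r:ℤ)-1),
        ((if (2*(r:ℤ)) ∣ c+x then (1:ℂ) else 0) - (if (2*(r:ℤ)) ∣ c-x then (1:ℂ) else 0)) * F x
        = if 2*(r:ℤ) - c = x then F x else 0 := by
      intro x hx
      rw [mem_Icc] at hx
      by_cases hxc : 2*(r:ℤ) - c = x
      · have hpx : (2*(r:ℤ)) ∣ c + x := ⟨1, by omega⟩
        rw [if_pos hxc, if_pos hpx, if_neg]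
        · ring
        · exact notdvd _ (by omega) (by omega)
      · rw [if_neg hxc, if_neg, if_neg]
        · ring
        · exact notdvd _ (by omega) (by omega)
        · intro hdd
          rcases (lt_or_gt_of_ne (fun h : c + x = 2*(r:ℤ) => hxc (by omega)) :
            c + x < 2*(r:ℤ) ∨ c + x > 2*(r:ℤ)) with hlt | hgt
          · exact notdvd _ (by omega) (by omega) hdd
          · have h3r : c + x < 4*(r:ℤ) := by omega
            rcases hdd with ⟨u, hu⟩
            have hu1 : 1 < u := by nlinarith
            have hu2 : u < 2 := by nlinarith
            omega
    rw [Finset.sum_congr rfl step, Finset.sum_ite_eq, if_pos hx0]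
    have hF2 : F (2*(r:ℤ) - c) = -F c := by
      have e : 2*(r:ℤ) - c = -(c - 2*(r:ℤ)) := by ring
      rw [e, Fodd, Fper' c]
    rw [hF2]

end Stmt7Aux

open Stmt7Aux in
/-- Evaluation of the final double sum in the computation of the matrix
coefficients of the quantized observable `C(p,q)`: for `t = exp(πi/(2r))`,
quantum integers `[n]` and `X² = Σ_{j=1}^{r-1} [j]²`, for all integers
`m, k, p, q`:
`Σ_{x,y=1}^{r-1} [my][yx]([k(x+q)]t^{-2px} + [k(x-q)]t^{2px})
  = X²([k(m+q)]t^{-2mp} + [k(m-q)]t^{2mp})`. -/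
theorem stmt7 (r : ℕ) (hr : 3 ≤ r) (t : ℂ)
    (ht : t = Complex.exp (Real.pi * Complex.I / (2 * r)))
    (qi : ℤ → ℂ)
    (hqi : ∀ n : ℤ, qi n = (t ^ (2 * n) - t ^ (-(2 * n))) / (t ^ (2 : ℤ) - t ^ (-2 : ℤ)))
    (X2 : ℂ) (hX2 : X2 = ∑ j ∈ Finset.Icc (1 : ℤ) ((r : ℤ) - 1), qi j ^ 2) :
    ∀ m k p q : ℤ,
      ∑ x ∈ Finset.Icc (1 : ℤ) ((r : ℤ) - 1), ∑ y ∈ Finset.Icc (1 : ℤ) ((r : ℤ) - 1),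
        qi (m * y) * qi (y * x) *
          (qi (k * (x + q)) * t ^ (-(2 * p * x)) + qi (k * (x - q)) * t ^ (2 * p * x))
      = X2 * (qi (k * (m + q)) * t ^ (-(2 * m * p)) + qi (k * (m - q)) * t ^ (2 * m * p)) := by
  -- basic constants
  have hrne : (r:ℂ) ≠ 0 := by simp only [ne_eq, Nat.cast_eq_zero]; omega
  have hpi : (Real.pi : ℂ) ≠ 0 := by
    simp only [ne_eq, Complex.ofReal_eq_zero]; exact Real.pi_ne_zero
  have ht0 : t ≠ 0 := by rw [ht]; exact Complex.exp_ne_zero _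
  set ζ : ℂ := t ^ (2:ℤ) with hζdef
  have hζ0 : ζ ≠ 0 := zpow_ne_zero _ ht0
  have hkey : ∀ a : ℤ, ζ^a = Complex.exp ((a : ℂ) * (Real.pi * Complex.I / r)) := by
    intro a
    rw [hζdef, ← zpow_mul, ht, ← Complex.exp_int_mul]
    congr 1
    push_cast
    field_simp
  have hord : ∀ a : ℤ, ζ ^ a = 1 ↔ (2*(r:ℤ)) ∣ a := by
    intro a
    rw [hkey, Complex.exp_eq_one_iff]
    constructor
    · rintro ⟨n, hn⟩
      refine ⟨n, ?_⟩
      have h2 : (a : ℂ) = 2 * n * r := by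
        field_simp at hn
        have hPI : (Real.pi:ℂ) * Complex.I ≠ 0 := mul_ne_zero hpi Complex.I_ne_zero
        apply mul_right_cancel₀ hPI
        linear_combination (↑Real.pi * Complex.I) * hn
      have h3 : a = 2 * n * r := by exact_mod_cast h2
      rw [h3]; push_cast; ring
    · rintro ⟨s, hs⟩
      refine ⟨s, ?_⟩
      rw [hs]
      push_cast
      field_simp
  have hζr : ζ ^ ((r:ℤ)) = -1 := by
    rw [hkey]
    rw [show ((r:ℤ) : ℂ) * (Real.pi * Complex.I / r) = Real.pi * Complex.I by field_simp; norm_cast]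
    exact Complex.exp_pi_mul_I
  set d : ℂ := ζ - ζ⁻¹ with hddef
  have hdne : d ≠ 0 := by
    intro h
    have hz : ζ = ζ⁻¹ := by rw [hddef] at h; linear_combination h
    have hζ2 : ζ^(2:ℤ) = 1 := by
      rw [show (2:ℤ) = 1 + 1 from rfl, zpow_add₀ hζ0, zpow_one]
      nth_rewrite 2 [hz]
      exact mul_inv_cancel₀ hζ0
    have hdd := (hord 2).mp hζ2
    have := Int.le_of_dvd (by norm_num) hdd
    omega
  have htζ : ∀ w : ℤ, t^(2*w) = ζ^w := fun w => by rw [hζdef, ← zpow_mul]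
  have hqi' : ∀ n : ℤ, qi n = (ζ^n - ζ^(-n))/d := by
    intro n
    have a1 : t^(2*n) = ζ^n := htζ n
    have a2 : t^(-(2*n)) = ζ^(-n) := by
      rw [show -(2*n) = 2*(-n) by ring, htζ]
    have a3 : t^(-2:ℤ) = ζ⁻¹ := by
      rw [show (-2:ℤ) = -(2:ℤ) from rfl, zpow_neg, hζdef]
    rw [hqi n, a1, a2, a3]
  -- qi facts
  have qi_neg : ∀ n : ℤ, qi (-n) = -qi n := by
    intro n
    rw [hqi', hqi', neg_neg]
    ring
  have hz2r : ∀ s : ℤ, ζ^(2*(r:ℤ)*s) = 1 := fun s => (hord _).mpr ⟨s, rfl⟩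
  have qi_per : ∀ n s : ℤ, qi (n + 2*(r:ℤ)*s) = qi n := by
    intro n s
    rw [hqi', hqi']
    congr 2
    · rw [zpow_add₀ hζ0, hz2r, mul_one]
    · rw [neg_add, zpow_add₀ hζ0, show -(2*(r:ℤ)*s) = 2*(r:ℤ)*(-s) by ring, hz2r, mul_one]
  have hm1 : ∀ s : ℤ, (-1:ℂ)^(-s) = (-1:ℂ)^s := by
    intro s
    have h : (-1:ℂ)^s * (-1:ℂ)^s = 1 := by
      rw [← mul_zpow]; norm_num
    rw [zpow_neg]
    exact inv_eq_of_mul_eq_one_right h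
  have qi_rmul : ∀ k' n : ℤ, qi (k'*(r:ℤ) + n) = (-1:ℂ)^k' * qi n := by
    intro k' n
    rw [hqi', hqi']
    have e1 : ζ^(k'*(r:ℤ) + n) = (-1:ℂ)^k' * ζ^n := by
      rw [zpow_add₀ hζ0, show k'*(r:ℤ) = (r:ℤ)*k' by ring, zpow_mul, hζr]
    have e2 : ζ^(-(k'*(r:ℤ) + n)) = (-1:ℂ)^k' * ζ^(-n) := by
      rw [show -(k'*(r:ℤ) + n) = (-k')*(r:ℤ) + (-n) by ring, zpow_add₀ hζ0,
        show (-k')*(r:ℤ) = (r:ℤ)*(-k') by ring, zpow_mul, hζr, hm1]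
    rw [e1, e2]
    ring
  -- X2 value
  have hcard : (Finset.Icc (1:ℤ) ((r:ℤ)-1)).card = r - 1 := by
    rw [Int.card_Icc]
    omega
  have hX2v : X2 = -(2*(r:ℂ))/d^2 := by
    rw [hX2]
    have hterm : ∀ j ∈ Finset.Icc (1:ℤ) ((r:ℤ)-1),
        qi j ^ 2 = ((ζ^(2*j) + ζ^(-(2*j))) - 2)/d^2 := by
      intro j _
      rw [hqi']
      have e1 : ζ^(2*j) = ζ^j * ζ^j := by rw [← zpow_add₀ hζ0]; congr 1; ring
      have e2 : ζ^(-(2*j)) = (ζ^j)⁻¹ * (ζ^j)⁻¹ := by rw [zpow_neg, e1, mul_inv]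
      rw [e1, e2, zpow_neg]
      have hA : ζ^j ≠ 0 := zpow_ne_zero _ hζ0
      field_simp
      ring
    rw [Finset.sum_congr rfl hterm, ← Finset.sum_div, Finset.sum_sub_distrib,
      Slem r hr ζ hζ0 hord 2]
    have hn2 : ¬ (2*(r:ℤ)) ∣ 2 := by
      intro h
      have := Int.le_of_dvd (by norm_num) h
      omega
    rw [if_neg hn2, Finset.sum_const, hcard, show ((r:ℤ))*2 = 2*(r:ℤ)*1 by ring, hz2r]
    rw [nsmul_eq_mul]
    have : ((r - 1 : ℕ) : ℂ) = (r:ℂ) - 1 := by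
      push_cast [Nat.cast_sub (by omega : 1 ≤ r)]
      ring
    rw [this]
    ring
  -- main
  intro m k p q
  set F : ℤ → ℂ := fun x => qi (k*(x+q)) * ζ^(-(p*x)) + qi (k*(x-q)) * ζ^(p*x) with hFdef
  have hbr : ∀ x : ℤ, qi (k*(x+q)) * t^(-(2*p*x)) + qi (k*(x-q)) * t^(2*p*x) = F x := by
    intro x
    rw [hFdef]
    have e1 : t^(-(2*p*x)) = ζ^(-(p*x)) := by
      rw [show -(2*p*x) = 2*(-(p*x)) by ring, htζ]
    have e2 : t^(2*p*x) = ζ^(p*x) := by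
      rw [show 2*p*x = 2*(p*x) by ring, htζ]
    rw [e1, e2]
  have Fper : ∀ x, F (x + 2*(r:ℤ)) = F x := by
    intro x
    rw [hFdef]
    simp only []
    have e1 : k*((x + 2*(r:ℤ))+q) = k*(x+q) + 2*(r:ℤ)*k := by ring
    have e2 : k*((x + 2*(r:ℤ))-q) = k*(x-q) + 2*(r:ℤ)*k := by ring
    have e3 : ζ^(-(p*(x + 2*(r:ℤ)))) = ζ^(-(p*x)) := by
      rw [show -(p*(x + 2*(r:ℤ))) = -(p*x) + 2*(r:ℤ)*(-p) by ring, zpow_add₀ hζ0, hz2r, mul_one]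
    have e4 : ζ^(p*(x + 2*(r:ℤ))) = ζ^(p*x) := by
      rw [show p*(x + 2*(r:ℤ)) = p*x + 2*(r:ℤ)*p by ring, zpow_add₀ hζ0, hz2r, mul_one]
    rw [e1, e2, e3, e4, qi_per, qi_per]
  have Fodd : ∀ x, F (-x) = -F x := by
    intro x
    rw [hFdef]
    simp only []
    have e1 : k*(-x+q) = -(k*(x-q)) := by ring
    have e2 : k*(-x-q) = -(k*(x+q)) := by ring
    have e3 : ζ^(-(p*(-x))) = ζ^(p*x) := by congr 1; ring
    have e4 : ζ^(p*(-x)) = ζ^(-(p*x)) := by congr 1; ring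
    rw [e1, e2, e3, e4, qi_neg, qi_neg]
    ring
  have Fr : F (r:ℤ) = 0 := by
    rw [hFdef]
    simp only []
    have e1 : k*((r:ℤ)+q) = k*(r:ℤ) + k*q := by ring
    have e2 : k*((r:ℤ)-q) = k*(r:ℤ) + (-(k*q)) := by ring
    have e3 : ζ^(p*(r:ℤ)) = (-1:ℂ)^p := by
      rw [show p*(r:ℤ) = (r:ℤ)*p by ring, zpow_mul, hζr]
    have e4 : ζ^(-(p*(r:ℤ))) = (-1:ℂ)^p := by
      rw [show -(p*(r:ℤ)) = (r:ℤ)*(-p) by ring, zpow_mul, hζr, hm1]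
    rw [e1, e2, e3, e4, qi_rmul, qi_rmul, qi_neg]
    ring
  -- rewrite the double sum
  have hLHS : ∀ x ∈ Finset.Icc (1:ℤ) ((r:ℤ)-1),
      ∑ y ∈ Finset.Icc (1 : ℤ) ((r : ℤ) - 1),
        qi (m * y) * qi (y * x) *
          (qi (k * (x + q)) * t ^ (-(2 * p * x)) + qi (k * (x - q)) * t ^ (2 * p * x))
      = 2*(r:ℂ)/d^2 * ((if (2*(r:ℤ)) ∣ m+x then (1:ℂ) else 0)
          - (if (2*(r:ℤ)) ∣ m-x then (1:ℂ) else 0)) * F x := by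
    intro x _
    rw [show ∑ y ∈ Finset.Icc (1 : ℤ) ((r : ℤ) - 1),
        qi (m * y) * qi (y * x) *
          (qi (k * (x + q)) * t ^ (-(2 * p * x)) + qi (k * (x - q)) * t ^ (2 * p * x))
      = (∑ y ∈ Finset.Icc (1 : ℤ) ((r : ℤ) - 1), qi (m * y) * qi (y * x)) *
          (qi (k * (x + q)) * t ^ (-(2 * p * x)) + qi (k * (x - q)) * t ^ (2 * p * x))
      from (Finset.sum_mul _ _ _).symm]
    rw [innerSum r hr ζ hζ0 hord d hdne qi hqi' m x, hbr x]
  rw [Finset.sum_congr rfl hLHS]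
  have hpull : ∑ x ∈ Finset.Icc (1:ℤ) ((r:ℤ)-1),
      2*(r:ℂ)/d^2 * ((if (2*(r:ℤ)) ∣ m+x then (1:ℂ) else 0)
          - (if (2*(r:ℤ)) ∣ m-x then (1:ℂ) else 0)) * F x
      = 2*(r:ℂ)/d^2 * ∑ x ∈ Finset.Icc (1:ℤ) ((r:ℤ)-1),
          ((if (2*(r:ℤ)) ∣ m+x then (1:ℂ) else 0)
          - (if (2*(r:ℤ)) ∣ m-x then (1:ℂ) else 0)) * F x := by
    rw [Finset.mul_sum]
    exact Finset.sum_congr rfl fun x _ => by ring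
  rw [hpull, deltaSum r hr F Fper Fodd Fr m]
  have hRHS : qi (k * (m + q)) * t ^ (-(2 * m * p)) + qi (k * (m - q)) * t ^ (2 * m * p)
      = F m := by
    rw [← hbr m]
    congr 2
    · congr 1; ring
    · congr 1; ring
  rw [hRHS, hX2v]
  ring
end
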